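/- Let (t, ε) be a signed Schröder tree and σ = perm(t, ε). For any two leaves i < j (in the canonical left-to-right order), σ_i < σ_j if and only if the common ancestor of leaves i and j in t has sign +. -/

import Mathlib

/-!
Within a direct or skew sum, two entries of the same summand compare as they do in that
summand, while an entry of the left summand is below every entry of the right summand in a
direct sum and above it in a skew sum, because all entries of a summand of length `n` lie
in `1, …, n`. Descending from the root, the comparison of `σ_i` and `σ_j` is therefore
decided at the first vertex where leaves `i` and `j` fall into different children, their
common ancestor, and it is decided by that vertex's sign.
-/


/-- Signed plane trees: a leaf, or an internal vertex carrying a sign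
(`true` = `+`, `false` = `-`) with an ordered list of subtrees. -/
inductive STree where
  | leaf : STree
  | node : Bool → List STree → STree

/-- Number of leaves. -/
def STree.nleaves : STree → ℕ
  | .leaf => 1
  | .node _ cs => (cs.attach.map (fun c => STree.nleaves c.1)).sum
decreasing_by simp_wf; have := List.sizeOf_lt_of_mem c.2; omega

/-- Direct sum of two permutations in one-line notation. -/
def oplus (a b : List ℕ) : List ℕ := a ++ b.map (· + a.length)

/-- Skew sum of two permutations in one-line notation. -/
def ominus (a b : List ℕ) : List ℕ := a.map (· + b.length) ++ b

/-- The permutation (in one-line notation, values `1,…,n`) associated with a signed tree: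
a leaf gives `[1]`; a `+`-signed vertex gives the direct sum of its children's permutations,
a `-`-signed vertex their skew sum. -/
def STree.permOf : STree → List ℕ
  | .leaf => [1]
  | .node s cs => (cs.attach.map (fun c => STree.permOf c.1)).foldr
      (if s then oplus else ominus) []
decreasing_by simp_wf; have := List.sizeOf_lt_of_mem c.2; omega

mutual
/-- The sign of the first common ancestor in `t` of the leaves with (0-indexed,
left-to-right) labels `i < j`. -/
def STree.caSign : STree → ℕ → ℕ → Bool
  | .leaf, _, _ => true
  | .node s cs, i, j => STree.caSignList s cs i j

/-- Helper for `STree.caSign`, scanning the list of children of a vertex of sign `s`. -/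
def STree.caSignList : Bool → List STree → ℕ → ℕ → Bool
  | s, [], _, _ => s
  | s, c :: rest, i, j =>
      if j < c.nleaves then STree.caSign c i j
      else if i < c.nleaves then s
      else STree.caSignList s rest (i - c.nleaves) (j - c.nleaves)
end

namespace STree

@[elab_as_elim]
theorem induction {motive : STree → Prop} (leaf : motive .leaf)
    (node : ∀ s cs, (∀ c ∈ cs, motive c) → motive (.node s cs)) : ∀ t, motive t
  | .leaf => leaf
  | .node s cs => node s cs fun c _ => induction leaf node c
decreasing_by simp_wf; have := List.sizeOf_lt_of_mem ‹c ∈ cs›; omega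

theorem nleaves_node (s : Bool) (cs : List STree) :
    (node s cs).nleaves = (cs.map nleaves).sum := by
  rw [nleaves]; simp

end STree

def signedSum (s : Bool) : List ℕ → List ℕ → List ℕ := if s then oplus else ominus

/-- A weak form of being a permutation of `1, …, n`, which is all the block comparisons need. -/
def EntriesInRange (l : List ℕ) : Prop := ∀ x ∈ l, 1 ≤ x ∧ x ≤ l.length

section signedSum

variable (s : Bool) {a b : List ℕ} {i j : ℕ}

theorem length_signedSum : (signedSum s a b).length = a.length + b.length := by
  cases s <;> simp [signedSum, oplus, ominus]

theorem length_foldr_signedSum (ls : List (List ℕ)) :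
    (ls.foldr (signedSum s) []).length = (ls.map List.length).sum := by
  induction ls with
  | nil => rfl
  | cons l ls ih => simp [length_signedSum, ih]

theorem entriesInRange_signedSum (ha : EntriesInRange a) (hb : EntriesInRange b) :
    EntriesInRange (signedSum s a b) := by
  intro x hx
  rw [length_signedSum]
  cases s <;> simp only [signedSum, oplus, ominus, Bool.false_eq_true, if_true, if_false,
    List.mem_append, List.mem_map] at hx
  · rcases hx with ⟨y, hy, rfl⟩ | hx
    · have := ha y hy; omega
    · have := hb x hx; omega
  · rcases hx with hx | ⟨y, hy, rfl⟩
    · have := ha x hx; omega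
    · have := hb y hy; omega

theorem entriesInRange_foldr_signedSum {ls : List (List ℕ)} (hls : ∀ l ∈ ls, EntriesInRange l) :
    EntriesInRange (ls.foldr (signedSum s) []) := by
  induction ls with
  | nil => simp [EntriesInRange]
  | cons l ls ih =>
    simp only [List.mem_cons, forall_eq_or_imp] at hls
    exact entriesInRange_signedSum s hls.1 (ih hls.2)

theorem signedSum_getD_lt_getD_iff_left (hi : i < a.length) (hj : j < a.length) :
    (signedSum s a b).getD i 0 < (signedSum s a b).getD j 0 ↔ a.getD i 0 < a.getD j 0 := by
  cases s <;> simp [signedSum, oplus, ominus, List.getElem?_append_left, *]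

theorem signedSum_getD_lt_getD_iff_right (hi : i < b.length) (hj : j < b.length) :
    (signedSum s a b).getD (a.length + i) 0 < (signedSum s a b).getD (a.length + j) 0 ↔
      b.getD i 0 < b.getD j 0 := by
  cases s <;> simp [signedSum, oplus, ominus, *]

theorem signedSum_getD_lt_getD_iff_cross (ha : EntriesInRange a) (hb : EntriesInRange b)
    (hi : i < a.length) (hj : j < b.length) :
    (signedSum s a b).getD i 0 < (signedSum s a b).getD (a.length + j) 0 ↔ s = true := by
  have hai := ha _ (List.getElem_mem hi)
  have hbj := hb _ (List.getElem_mem hj)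
  cases s <;> simp [signedSum, oplus, ominus, List.getElem?_append_left, *] <;> omega

end signedSum

namespace STree

theorem permOf_node (s : Bool) (cs : List STree) :
    (node s cs).permOf = (cs.map permOf).foldr (signedSum s) [] := by
  rw [permOf]; simp [signedSum]

theorem length_permOf (t : STree) : t.permOf.length = t.nleaves := by
  induction t using STree.induction with
  | leaf => simp [permOf, nleaves]
  | node s cs ih =>
    rw [permOf_node, nleaves_node, length_foldr_signedSum, List.map_map]
    exact congrArg List.sum (List.map_congr_left ih)

theorem entriesInRange_permOf (t : STree) : EntriesInRange t.permOf := by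
  induction t using STree.induction with
  | leaf => simp [EntriesInRange, permOf]
  | node s cs ih =>
    rw [permOf_node]
    exact entriesInRange_foldr_signedSum s (by simpa using ih)

theorem getD_foldr_lt_getD_iff_caSignList (s : Bool) (cs : List STree)
    (hcs : ∀ c ∈ cs, ∀ i j, i < j → j < c.nleaves →
      (c.permOf.getD i 0 < c.permOf.getD j 0 ↔ c.caSign i j = true)) :
    ∀ i j, i < j → j < (cs.map nleaves).sum →
      (((cs.map permOf).foldr (signedSum s) []).getD i 0 <
          ((cs.map permOf).foldr (signedSum s) []).getD j 0 ↔ caSignList s cs i j = true) := by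
  induction cs with
  | nil => simp
  | cons c cs ih =>
    simp only [List.mem_cons, forall_eq_or_imp] at hcs
    intro i j hij hj
    have hrest := length_permOf (node s cs)
    have hrest_entries := entriesInRange_permOf (node s cs)
    rw [permOf_node] at hrest hrest_entries
    rw [nleaves_node] at hrest
    simp only [List.map_cons, List.sum_cons, List.foldr_cons, caSignList] at hj ⊢
    rw [← length_permOf] at hj ⊢
    split_ifs with hjc hic
    · rw [signedSum_getD_lt_getD_iff_left s (by omega) hjc]
      exact hcs.1 i j hij (by rwa [← length_permOf])
    · obtain ⟨j, rfl⟩ := Nat.exists_eq_add_of_le (Nat.le_of_not_lt hjc)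
      exact signedSum_getD_lt_getD_iff_cross s (entriesInRange_permOf c) hrest_entries hic
        (by omega)
    · obtain ⟨i, rfl⟩ := Nat.exists_eq_add_of_le (Nat.le_of_not_lt hic)
      obtain ⟨j, rfl⟩ := Nat.exists_eq_add_of_le (Nat.le_of_not_lt hjc)
      rw [signedSum_getD_lt_getD_iff_right s (by omega) (by omega)]
      simpa using ih hcs.2 i j (by omega) (by omega)

end STree

/-- Let `(t, ε)` be a signed Schröder tree and `σ = perm(t, ε)`. For any two leaves
`i < j` (canonical left-to-right, 0-indexed), `σ_i < σ_j` iff the common ancestor of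
leaves `i` and `j` has sign `+`. -/
theorem perm_lt_iff_commonAncestor_plus (t : STree) (i j : ℕ)
    (hij : i < j) (hj : j < t.nleaves) :
    t.permOf.getD i 0 < t.permOf.getD j 0 ↔ t.caSign i j = true := by
  induction t using STree.induction generalizing i j with
  | leaf => simp [STree.nleaves] at hj; omega
  | node s cs ih =>
    rw [STree.permOf_node, STree.caSign]
    rw [STree.nleaves_node] at hj
    exact STree.getD_foldr_lt_getD_iff_caSignList s cs ih i j hij hj
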